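/- Let G be a simple digraph containing three distinct vertices u, v, w with arcs (u,v),(v,w),(w,u) and no arcs (v,u),(w,v),(u,w). Suppose x and y are distinct vertices outside {u,v,w} such that none of (x,u),(x,v),(x,w) is an arc of G (x sends no arc into the 3-cycle), none of (u,y),(v,y),(w,y) is an arc of G (y receives no arc from the 3-cycle), and (x,y) is an arc of G. Then G can be transformed by a finite sequence of 2-switches into the digraph G' obtained from G by reorienting the directed 3-cycle on {u,v,w}. -/

import Mathlib

/-- A simple directed graph on vertex set `V`: an irreflexive (Boolean) arc
relation, i.e. no self-loops and at most one arc in each direction. -/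
structure SDigraph (V : Type) where
  Adj : V → V → Bool
  irrefl : ∀ v, Adj v v = false

/-- Out-degree of a vertex. -/
def SDigraph.outDeg {V : Type} [Fintype V] [DecidableEq V]
    (G : SDigraph V) (v : V) : ℕ :=
  (Finset.univ.filter fun x => G.Adj v x = true).card

/-- In-degree of a vertex. -/
def SDigraph.inDeg {V : Type} [Fintype V] [DecidableEq V]
    (G : SDigraph V) (v : V) : ℕ :=
  (Finset.univ.filter fun x => G.Adj x v = true).card

/-- `G` realizes the integer-pair (degree) sequence `d`: vertex `v` has
out-degree `(d v).1` and in-degree `(d v).2`. -/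
def Realizes {V : Type} [Fintype V] [DecidableEq V]
    (G : SDigraph V) (d : V → ℕ × ℕ) : Prop :=
  ∀ v, G.outDeg v = (d v).1 ∧ G.inDeg v = (d v).2

/-- `H` is obtained from `G` by a single 2-switch: arcs `(v₁,v₂)`, `(v₃,v₄)`
are replaced by `(v₁,v₄)`, `(v₃,v₂)`, allowed only when the four vertices
are distinct, the former two are arcs and the latter two are not. -/
def TwoSwitch {V : Type} [DecidableEq V] (G H : SDigraph V) : Prop :=
  ∃ v₁ v₂ v₃ v₄ : V,
    v₁ ≠ v₂ ∧ v₁ ≠ v₃ ∧ v₁ ≠ v₄ ∧ v₂ ≠ v₃ ∧ v₂ ≠ v₄ ∧ v₃ ≠ v₄ ∧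
    G.Adj v₁ v₂ = true ∧ G.Adj v₃ v₄ = true ∧
    G.Adj v₁ v₄ = false ∧ G.Adj v₃ v₂ = false ∧
    ∀ x y, H.Adj x y =
      if (x = v₁ ∧ y = v₂) ∨ (x = v₃ ∧ y = v₄) then false
      else if (x = v₁ ∧ y = v₄) ∨ (x = v₃ ∧ y = v₂) then true
      else G.Adj x y

/-- `G` and `H` differ by a single 2-switch (in either direction). -/
def TwoSwitchStep {V : Type} [DecidableEq V] (G H : SDigraph V) : Prop :=
  TwoSwitch G H ∨ TwoSwitch H G

/-- `H` is reachable from `G` by a finite sequence of 2-switches. -/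
def Reach2 {V : Type} [DecidableEq V] (G H : SDigraph V) : Prop :=
  Relation.ReflTransGen TwoSwitchStep G H

/-- `H` is obtained from `G` by reorienting an induced directed 3-cycle:
there are distinct `u v w` with arcs `(u,v),(v,w),(w,u)` and no arcs
`(v,u),(w,v),(u,w)`, and `H` replaces these three arcs by the reversed ones. -/
def CycleReorient {V : Type} [DecidableEq V] (G H : SDigraph V) : Prop :=
  ∃ u v w : V, u ≠ v ∧ v ≠ w ∧ u ≠ w ∧
    G.Adj u v = true ∧ G.Adj v w = true ∧ G.Adj w u = true ∧
    G.Adj v u = false ∧ G.Adj w v = false ∧ G.Adj u w = false ∧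
    ∀ x y, H.Adj x y =
      if (x = u ∨ x = v ∨ x = w) ∧ (y = u ∨ y = v ∨ y = w) then G.Adj y x
      else G.Adj x y

/-- The three vertices `u, v, w` induce a directed 3-cycle in `G`: the induced
subgraph on them consists of exactly the three arcs of one cyclic orientation. -/
def InducesC3 {V : Type} (G : SDigraph V) (u v w : V) : Prop :=
  (G.Adj u v = true ∧ G.Adj v w = true ∧ G.Adj w u = true ∧
    G.Adj v u = false ∧ G.Adj w v = false ∧ G.Adj u w = false) ∨
  (G.Adj v u = true ∧ G.Adj w v = true ∧ G.Adj u w = true ∧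
    G.Adj u v = false ∧ G.Adj v w = false ∧ G.Adj w u = false)

/-- The digraph obtained from `G` by reversing all arcs among `{u, v, w}`
(and leaving all other arcs unchanged).  When `{u,v,w}` induces a directed
3-cycle in `G`, this is exactly the reorientation of that 3-cycle. -/
def flip3 {V : Type} [DecidableEq V] (G : SDigraph V) (u v w : V) : SDigraph V where
  Adj x y :=
    if (x = u ∨ x = v ∨ x = w) ∧ (y = u ∨ y = v ∨ y = w) then G.Adj y x
    else G.Adj x y
  irrefl := by
    intro x
    try simp only []
    rw [ite_self]
    exact G.irrefl x
/-!
Four 2-switches suffice, each applicable because of the hypotheses on `x` and `y`: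
`(x,y),(u,v) ↦ (x,v),(u,y)`, then `(u,y),(v,w) ↦ (u,w),(v,y)`, then
`(w,u),(x,v) ↦ (w,v),(x,u)`, and finally `(x,u),(v,y) ↦ (x,y),(v,u)`.
Each auxiliary arc `(x,v),(u,y),(v,y),(x,u)` is created once and destroyed once, `(x,y)` is
removed and restored, and the three arcs of the cycle are replaced by their reverses.
-/

namespace SDigraph

variable {V : Type}

theorem ext {G H : SDigraph V} (h : G.Adj = H.Adj) : G = H := by
  cases G; cases H; cases h; rfl

variable [DecidableEq V]

/-- The guard `p ≠ q` makes the result loopless for all arguments; it is vacuous when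
`a ≠ d` and `c ≠ b`, see `switch_adj`. -/
def switch (G : SDigraph V) (a b c d : V) : SDigraph V where
  Adj p q :=
    if (p = a ∧ q = b) ∨ (p = c ∧ q = d) then false
    else if p ≠ q ∧ ((p = a ∧ q = d) ∨ (p = c ∧ q = b)) then true
    else G.Adj p q
  irrefl p := by simp [G.irrefl]

theorem switch_adj (G : SDigraph V) {a b c d : V} (had : a ≠ d) (hcb : c ≠ b) (p q : V) :
    (G.switch a b c d).Adj p q =
      if (p = a ∧ q = b) ∨ (p = c ∧ q = d) then false
      else if (p = a ∧ q = d) ∨ (p = c ∧ q = b) then true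
      else G.Adj p q := by
  simp only [switch]
  grind

theorem twoSwitch_switch (G : SDigraph V) {a b c d : V}
    (hab : a ≠ b) (hac : a ≠ c) (had : a ≠ d) (hbc : b ≠ c) (hbd : b ≠ d) (hcd : c ≠ d)
    (hab' : G.Adj a b = true) (hcd' : G.Adj c d = true)
    (had' : G.Adj a d = false) (hcb' : G.Adj c b = false) :
    TwoSwitch G (G.switch a b c d) :=
  ⟨a, b, c, d, hab, hac, had, hbc, hbd, hcd, hab', hcd', had', hcb',
    G.switch_adj had hbc.symm⟩

theorem switch_switch_switch_switch_eq_flip3 (G : SDigraph V) {u v w x y : V}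
    (huv : u ≠ v) (hvw : v ≠ w) (huw : u ≠ w) (hxy : x ≠ y) (hxu : x ≠ u) (hxv : x ≠ v)
    (hxw : x ≠ w) (hyu : y ≠ u) (hyv : y ≠ v) (hyw : y ≠ w)
    (huv' : G.Adj u v = true) (hvw' : G.Adj v w = true) (hwu' : G.Adj w u = true)
    (hvu' : G.Adj v u = false) (hwv' : G.Adj w v = false) (huw' : G.Adj u w = false)
    (hxy' : G.Adj x y = true) (hxu' : G.Adj x u = false) (hxv' : G.Adj x v = false)
    (huy' : G.Adj u y = false) (hvy' : G.Adj v y = false) :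
    (((G.switch x y u v).switch u y v w).switch w u x v).switch x u v y = flip3 G u v w := by
  refine ext (funext₂ fun p q => ?_)
  simp only [switch, flip3]
  grind [G.irrefl]

end SDigraph

theorem statement7_general {V : Type} [DecidableEq V] (G : SDigraph V)
    (u v w : V) (huv : u ≠ v) (hvw : v ≠ w) (huw : u ≠ w)
    (hc : G.Adj u v = true ∧ G.Adj v w = true ∧ G.Adj w u = true ∧
      G.Adj v u = false ∧ G.Adj w v = false ∧ G.Adj u w = false)
    (x y : V) (hxy : x ≠ y)
    (hxu : x ≠ u) (hxv : x ≠ v) (hxw : x ≠ w)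
    (hyu : y ≠ u) (hyv : y ≠ v) (hyw : y ≠ w)
    (hxin : G.Adj x u = false ∧ G.Adj x v = false ∧ G.Adj x w = false)
    (hyout : G.Adj u y = false ∧ G.Adj v y = false ∧ G.Adj w y = false)
    (harc : G.Adj x y = true) :
    Reach2 G (flip3 G u v w) := by
  obtain ⟨huv', hvw', hwu', hvu', hwv', huw'⟩ := hc
  obtain ⟨hxu', hxv', -⟩ := hxin
  obtain ⟨huy', hvy', -⟩ := hyout
  set G₁ := G.switch x y u v
  set G₂ := G₁.switch u y v w
  set G₃ := G₂.switch w u x v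
  have s₁ : TwoSwitch G G₁ := G.twoSwitch_switch hxy hxu hxv hyu hyv huv harc huv' hxv' huy'
  have s₂ : TwoSwitch G₁ G₂ := by
    apply G₁.twoSwitch_switch hyu.symm huv huw hyv hyw hvw <;>
      simp only [G₁, SDigraph.switch] <;> grind
  have s₃ : TwoSwitch G₂ G₃ := by
    apply G₂.twoSwitch_switch huw.symm hxw.symm hvw.symm hxu.symm huv hxv <;>
      simp only [G₂, G₁, SDigraph.switch] <;> grind
  have s₄ : TwoSwitch G₃ (flip3 G u v w) := by
    rw [← G.switch_switch_switch_switch_eq_flip3 huv hvw huw hxy hxu hxv hxw hyu hyv hyw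
      huv' hvw' hwu' hvu' hwv' huw' harc hxu' hxv' huy' hvy']
    apply G₃.twoSwitch_switch hxu hxv hxy huv hyu.symm hyv.symm <;>
      simp only [G₃, G₂, G₁, SDigraph.switch] <;> grind
  exact .head (.inl s₁) (.head (.inl s₂) (.head (.inl s₃) (.single (.inl s₄))))

/-- if `G` has a directed 3-cycle `(u,v),(v,w),(w,u)` (with no
reverse arcs), and `x, y` are distinct vertices outside `{u,v,w}` such that `x`
sends no arc into the 3-cycle, `y` receives no arc from the 3-cycle, and
`(x,y)` is an arc, then `G` can be transformed by a finite sequence of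
2-switches into the digraph obtained by reorienting the 3-cycle. -/
theorem statement7 {V : Type} [Fintype V] [DecidableEq V] (G : SDigraph V)
    (u v w : V) (huv : u ≠ v) (hvw : v ≠ w) (huw : u ≠ w)
    (hc : G.Adj u v = true ∧ G.Adj v w = true ∧ G.Adj w u = true ∧
      G.Adj v u = false ∧ G.Adj w v = false ∧ G.Adj u w = false)
    (x y : V) (hxy : x ≠ y)
    (hxu : x ≠ u) (hxv : x ≠ v) (hxw : x ≠ w)
    (hyu : y ≠ u) (hyv : y ≠ v) (hyw : y ≠ w)
    (hxin : G.Adj x u = false ∧ G.Adj x v = false ∧ G.Adj x w = false)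
    (hyout : G.Adj u y = false ∧ G.Adj v y = false ∧ G.Adj w y = false)
    (harc : G.Adj x y = true) :
    Reach2 G (flip3 G u v w) :=
  statement7_general G u v w huv hvw huw hc x y hxy hxu hxv hxw hyu hyv hyw hxin hyout harc
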